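/- For an integer $k \geq 3$ and complex numbers $x, y$ with $|x| < 1$, $|y| < 1$, $x, y \neq 0$: $\sum_{j=1}^{k-1} 2^{j-1}\left( \mathrm{Li}_{k-j,j}(x^{-1}y, x) + \mathrm{Li}_{k-j,j}(xy^{-1}, y) \right) + \mathrm{Li}_{1,k-1}(x^{-1}, xy) + \mathrm{Li}_{1,k-1}(y^{-1}, xy) = (\mathrm{Li}_1(x) + \mathrm{Li}_1(y))\,\mathrm{Li}_{k-1}(xy) + (k-1)\,\mathrm{Li}_k(xy)$. -/

import Mathlib

/-!
Every series in the identity is a double power series `∑_{m,n ≥ 1} c(m,n) x^m y^n` whose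
coefficients have modulus at most one, so all of them converge absolutely for `|x|, |y| < 1`
and the identity reduces to one between coefficients. Off the diagonal, the `j`-sum of the
coefficients of `Li_{k-j,j}(x⁻¹y, x)` and `Li_{k-j,j}(xy⁻¹, y)` consists of two geometric
sums with ratios `2m/(m+n)` and `2n/(m+n)`; together with the coefficient of the appropriate
`Li_{1,k-1}` they telescope to the coefficient of `Li_1 · Li_{k-1}`. On the diagonal every `j`
contributes `m^{-k}`, which accounts for `(k-1) Li_k(xy)`.
-/

open scoped BigOperators

/-- The polylogarithm `Li_k(z) = ∑_{m ≥ 1} z^m / m^k`. -/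
noncomputable def Li (k : ℕ) (z : ℂ) : ℂ :=
  ∑' m : ℕ, z ^ (m + 1) / ((m + 1 : ℕ) : ℂ) ^ k

/-- The double polylogarithm `Li_{k₁,k₂}(z₁,z₂) = ∑_{0 < m₁ < m₂} z₁^{m₁} z₂^{m₂} / (m₁^{k₁} m₂^{k₂})`,
parametrized by `m₁ = p.1 + 1`, `m₂ = p.1 + p.2 + 2`. -/
noncomputable def Li₂ (k₁ k₂ : ℕ) (z₁ z₂ : ℂ) : ℂ :=
  ∑' p : ℕ × ℕ, z₁ ^ (p.1 + 1) * z₂ ^ (p.1 + p.2 + 2) /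
    (((p.1 + 1) ^ k₁ * (p.1 + p.2 + 2) ^ k₂ : ℕ) : ℂ)

open Finset Function

section WeightedInvSum

variable {K : Type*} [Field K]

/-- For positive integers `m, n`, `weightedInvSum k n m` is the coefficient of `x^m y^n` in
`∑_{j=1}^{k-1} 2^{j-1} Li_{k-j,j}(x⁻¹y, x)`. -/
noncomputable def weightedInvSum (k : ℕ) (A B : K) : K :=
  ∑ j ∈ Icc 1 (k - 1), 2 ^ (j - 1) * (A ^ (k - j) * (A + B) ^ j)⁻¹

/-- A geometric sum: the `j`-th term is `(2A/(A+B))^{j-1} / (A^{k-1} (A+B))`. -/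
theorem weightedInvSum_mul_sub (k : ℕ) {A B : K} (hA : A ≠ 0) (hAB : A + B ≠ 0) :
    weightedInvSum k A B * (A - B) = 2 ^ (k - 1) * ((A + B) ^ (k - 1))⁻¹ - (A ^ (k - 1))⁻¹ := by
  set s := 2 * (A + B)⁻¹
  set a := A⁻¹
  have hterm : ∀ i ∈ range (k - 1),
      (2 : K) ^ (1 + i - 1) * (A ^ (k - (1 + i)) * (A + B) ^ (1 + i))⁻¹ =
        s ^ i * a ^ (k - 1 - 1 - i) * (a * (A + B)⁻¹) := by
    intro i hi
    rw [mem_range] at hi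
    rw [show k - (1 + i) = k - 1 - 1 - i + 1 by omega, add_comm 1 i]
    simp only [s, a, mul_pow, inv_pow, mul_inv, pow_succ, Nat.add_sub_cancel]
    ring
  have hsa : s - a = a * (A + B)⁻¹ * (A - B) := by
    simp only [s, a]
    field_simp
    ring
  rw [weightedInvSum, ← Ico_add_one_right_eq_Icc, sum_Ico_eq_sum_range, Nat.add_sub_cancel,
    sum_congr rfl hterm, ← sum_mul, mul_assoc, ← hsa, geom_sum₂_mul]
  simp only [s, a, mul_pow, inv_pow]

theorem weightedInvSum_add_weightedInvSum (k : ℕ) {A B : K} (hA : A ≠ 0) (hB : B ≠ 0)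
    (hAB : A + B ≠ 0) (hne : A ≠ B) :
    weightedInvSum k A B + weightedInvSum k B A + ((B - A) * B ^ (k - 1))⁻¹ =
      ((B - A) * A ^ (k - 1))⁻¹ := by
  have hAB' : A - B ≠ 0 := sub_ne_zero.mpr hne
  have hBA : B - A ≠ 0 := sub_ne_zero.mpr hne.symm
  rw [eq_div_of_mul_eq hAB' (weightedInvSum_mul_sub k hA hAB),
    eq_div_of_mul_eq hBA (weightedInvSum_mul_sub k hB (add_comm A B ▸ hAB)), add_comm B A]
  field_simp
  ring

theorem weightedInvSum_self [CharZero K] {k : ℕ} {A : K} (hk : 1 ≤ k) (hA : A ≠ 0) :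
    weightedInvSum k A A + weightedInvSum k A A = (k - 1) * (A ^ k)⁻¹ := by
  have hterm : ∀ j ∈ Icc 1 (k - 1), (2 : K) ^ (j - 1) * (A ^ (k - j) * (A + A) ^ j)⁻¹ =
      2⁻¹ * (A ^ k)⁻¹ := by
    intro j hj
    obtain ⟨i, rfl⟩ : ∃ i, j = i + 1 := ⟨j - 1, by grind⟩
    rw [← two_mul, mul_pow, mul_left_comm, ← pow_add, show k - (i + 1) + (i + 1) = k by grind,
      Nat.add_sub_cancel, pow_succ]
    field_simp
  rw [weightedInvSum, sum_congr rfl hterm, sum_const, Nat.card_Icc, Nat.add_sub_cancel,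
    nsmul_eq_mul, Nat.cast_pred hk]
  field_simp
  ring

end WeightedInvSum

/-- The term of `∑_{m,n ≥ 1} c m n x^m y^n` indexed by `(m - 1, n - 1)`. -/
noncomputable def doubleTerm (x y : ℂ) (c : ℕ → ℕ → ℂ) (p : ℕ × ℕ) : ℂ :=
  c (p.1 + 1) (p.2 + 1) * (x ^ (p.1 + 1) * y ^ (p.2 + 1))

theorem doubleTerm_apply (x y : ℂ) (c : ℕ → ℕ → ℂ) (p : ℕ × ℕ) :
    doubleTerm x y c p = c (p.1 + 1) (p.2 + 1) * (x ^ (p.1 + 1) * y ^ (p.2 + 1)) := rfl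

theorem norm_natCast_inv_le_one (N : ℕ) : ‖(N : ℂ)⁻¹‖ ≤ 1 := by
  rw [norm_inv, Complex.norm_natCast]
  exact Nat.cast_inv_le_one N

theorem norm_ite_natCast_inv_le_one (P : Prop) [Decidable P] (N : ℕ) :
    ‖if P then (N : ℂ)⁻¹ else 0‖ ≤ 1 := by
  split_ifs
  · exact norm_natCast_inv_le_one N
  · simp

theorem summable_norm_pow_succ {z : ℂ} (hz : ‖z‖ < 1) : Summable fun n : ℕ => ‖z ^ (n + 1)‖ :=
  (summable_nat_add_iff 1).mpr (summable_norm_geometric_of_norm_lt_one hz)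

section DoubleSeries

variable {x y : ℂ}

theorem summable_doubleTerm {c : ℕ → ℕ → ℂ} (hc : ∀ m n, ‖c m n‖ ≤ 1) (hx : ‖x‖ < 1)
    (hy : ‖y‖ < 1) : Summable (doubleTerm x y c) := by
  refine .of_norm_bounded ((summable_norm_pow_succ hx).mul_norm (summable_norm_pow_succ hy))
    fun p => ?_
  rw [doubleTerm_apply, norm_mul]
  exact mul_le_of_le_one_left (norm_nonneg _) (hc _ _)

theorem hasSum_doubleTerm_of_tsum_comp {ι : Type*} {c : ℕ → ℕ → ℂ} {v : ℂ}
    (hc : ∀ m n, ‖c m n‖ ≤ 1) (hx : ‖x‖ < 1) (hy : ‖y‖ < 1) {g : ι → ℕ × ℕ} (hg : Injective g)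
    (hsupp : ∀ p ∉ Set.range g, c (p.1 + 1) (p.2 + 1) = 0)
    (hv : ∑' i, doubleTerm x y c (g i) = v) : HasSum (doubleTerm x y c) v := by
  subst hv
  have hzero : ∀ p ∉ Set.range g, doubleTerm x y c p = 0 := fun p hp => by
    rw [doubleTerm_apply, hsupp p hp, zero_mul]
  exact (hg.hasSum_iff hzero).mp
    ((hg.summable_iff hzero).mpr (summable_doubleTerm hc hx hy)).hasSum

theorem HasSum.doubleTerm_swap {c : ℕ → ℕ → ℂ} {v : ℂ} (h : HasSum (doubleTerm y x c) v) :
    HasSum (doubleTerm x y (flip c)) v := by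
  rw [← (Equiv.prodComm ℕ ℕ).hasSum_iff]
  convert h using 1
  ext p
  simp only [comp_apply, Equiv.prodComm_apply, Prod.fst_swap, Prod.snd_swap, doubleTerm_apply,
    flip, mul_comm (y ^ _)]
theorem hasSum_doubleTerm_Li₂_inv_mul (a b : ℕ) (hx0 : x ≠ 0) (hx : ‖x‖ < 1) (hy : ‖y‖ < 1) :
    HasSum (doubleTerm x y fun m n => ((n ^ a * (n + m) ^ b : ℕ) : ℂ)⁻¹) (Li₂ a b (x⁻¹ * y) x) := by
  refine hasSum_doubleTerm_of_tsum_comp (fun _ _ => norm_natCast_inv_le_one _) hx hy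
    (Equiv.prodComm ℕ ℕ).injective (by simp) (tsum_congr fun ⟨i, l⟩ => ?_)
  simp only [doubleTerm_apply, Equiv.prodComm_apply, Prod.swap_prod_mk]
  rw [show i + 1 + (l + 1) = i + l + 2 by ring, mul_pow, inv_pow,
    show i + l + 2 = (i + 1) + (l + 1) by ring, pow_add]
  field_simp
  ring

theorem hasSum_doubleTerm_Li₂_inv (a b : ℕ) (hx0 : x ≠ 0) (hx : ‖x‖ < 1) (hy : ‖y‖ < 1) :
    HasSum (doubleTerm x y fun m n => if m < n then (((n - m) ^ a * n ^ b : ℕ) : ℂ)⁻¹ else 0)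
      (Li₂ a b x⁻¹ (x * y)) := by
  have hg : Injective fun p : ℕ × ℕ => (p.2, p.1 + p.2 + 1) := fun p q h => by
    simp only [Prod.mk.injEq] at h
    exact Prod.ext (by omega) (by omega)
  refine hasSum_doubleTerm_of_tsum_comp (fun _ _ => norm_ite_natCast_inv_le_one _ _) hx hy hg
    (fun p hp => if_neg fun h => hp ⟨(p.2 - p.1 - 1, p.1), by ext <;> simp; omega⟩)
    (tsum_congr fun ⟨i, l⟩ => ?_)
  simp only [doubleTerm_apply, if_pos (by omega : l + 1 < i + l + 1 + 1)]
  rw [show i + l + 1 + 1 - (l + 1) = i + 1 by omega, show i + l + 1 + 1 = i + l + 2 by ring,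
    mul_pow, inv_pow, show i + l + 2 = (i + 1) + (l + 1) by ring, pow_add]
  field_simp
  ring

theorem hasSum_doubleTerm_Li_mul_Li (a b : ℕ) (hx : ‖x‖ < 1) (hy : ‖y‖ < 1) :
    HasSum (doubleTerm x y fun m n => if n < m then (((m - n) ^ a * n ^ b : ℕ) : ℂ)⁻¹ else 0)
      (Li a x * Li b (x * y)) := by
  have hxy : ‖x * y‖ < 1 := by
    rw [norm_mul]
    exact mul_lt_one_of_nonneg_of_lt_one_left (norm_nonneg x) hx hy.le
  have hLi {z : ℂ} (hz : ‖z‖ < 1) (e : ℕ) :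
      Summable fun m : ℕ => ‖z ^ (m + 1) / ((m + 1 : ℕ) : ℂ) ^ e‖ :=
    (summable_norm_pow_succ hz).of_nonneg_of_le (fun _ => norm_nonneg _) fun m => by
      rw [div_eq_mul_inv, norm_mul, ← Nat.cast_pow]
      exact mul_le_of_le_one_right (norm_nonneg _) (norm_natCast_inv_le_one _)
  have hg : Injective fun p : ℕ × ℕ => (p.1 + p.2 + 1, p.2) := fun p q h => by
    simp only [Prod.mk.injEq] at h
    exact Prod.ext (by omega) (by omega)
  rw [Li, Li, tsum_mul_tsum_of_summable_norm (hLi hx a) (hLi hxy b)]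
  refine hasSum_doubleTerm_of_tsum_comp (fun _ _ => norm_ite_natCast_inv_le_one _ _) hx hy hg
    (fun p hp => if_neg fun h => hp ⟨(p.1 - p.2 - 1, p.2), by ext <;> simp; omega⟩)
    (tsum_congr fun ⟨i, l⟩ => ?_)
  simp only [doubleTerm_apply, if_pos (by omega : l + 1 < i + l + 1 + 1)]
  rw [show i + l + 1 + 1 - (l + 1) = i + 1 by omega,
    show i + l + 1 + 1 = (i + 1) + (l + 1) by ring, mul_pow, pow_add]
  push_cast
  ring

theorem hasSum_doubleTerm_Li (a : ℕ) (hx : ‖x‖ < 1) (hy : ‖y‖ < 1) :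
    HasSum (doubleTerm x y fun m n => if m = n then ((m ^ a : ℕ) : ℂ)⁻¹ else 0) (Li a (x * y)) := by
  refine hasSum_doubleTerm_of_tsum_comp (fun _ _ => norm_ite_natCast_inv_le_one _ _) hx hy
    (g := fun n : ℕ => (n, n)) (fun m n h => (Prod.mk.inj h).1)
    (fun p hp => if_neg fun h => hp ⟨p.1, by ext <;> simp; omega⟩) (tsum_congr fun n => ?_)
  simp only [doubleTerm_apply]
  push_cast
  ring

end DoubleSeries

theorem weighted_sum_formula_coeff {k m n : ℕ} (hk : 1 ≤ k) (hm : 0 < m) (hn : 0 < n) :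
    ∑ j ∈ Icc 1 (k - 1), (2 : ℂ) ^ (j - 1) *
        (((n ^ (k - j) * (n + m) ^ j : ℕ) : ℂ)⁻¹ + ((m ^ (k - j) * (m + n) ^ j : ℕ) : ℂ)⁻¹) +
      (if m < n then (((n - m) * n ^ (k - 1) : ℕ) : ℂ)⁻¹ else 0) +
      (if n < m then (((m - n) * m ^ (k - 1) : ℕ) : ℂ)⁻¹ else 0) =
    (if n < m then (((m - n) * n ^ (k - 1) : ℕ) : ℂ)⁻¹ else 0) +
      (if m < n then (((n - m) * m ^ (k - 1) : ℕ) : ℂ)⁻¹ else 0) +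
      ((k : ℂ) - 1) * (if m = n then ((m ^ k : ℕ) : ℂ)⁻¹ else 0) := by
  have hm' : (m : ℂ) ≠ 0 := Nat.cast_ne_zero.mpr hm.ne'
  have hn' : (n : ℂ) ≠ 0 := Nat.cast_ne_zero.mpr hn.ne'
  have hmn : (m : ℂ) + n ≠ 0 := by exact_mod_cast (by omega : m + n ≠ 0)
  have hsum : ∑ j ∈ Icc 1 (k - 1), (2 : ℂ) ^ (j - 1) *
        (((n ^ (k - j) * (n + m) ^ j : ℕ) : ℂ)⁻¹ + ((m ^ (k - j) * (m + n) ^ j : ℕ) : ℂ)⁻¹) =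
      weightedInvSum k (n : ℂ) m + weightedInvSum k (m : ℂ) n := by
    rw [weightedInvSum, weightedInvSum, ← sum_add_distrib]
    push_cast
    simp only [mul_add]
  rw [hsum]
  rcases lt_trichotomy m n with h | rfl | h
  · simp only [if_pos h, if_neg h.not_gt, if_neg h.ne]
    push_cast [Nat.cast_sub h.le]
    linear_combination weightedInvSum_add_weightedInvSum k hm' hn' hmn (by exact_mod_cast h.ne)
  · simp only [lt_irrefl, if_false, if_true]
    push_cast
    linear_combination weightedInvSum_self hk hm'
  · simp only [if_pos h, if_neg h.not_gt, if_neg h.ne']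
    push_cast [Nat.cast_sub h.le]
    linear_combination weightedInvSum_add_weightedInvSum k hn' hm' (add_comm (m : ℂ) n ▸ hmn)
      (by exact_mod_cast h.ne)

theorem weighted_sum_formula_two_variables (k : ℕ) (hk : 3 ≤ k) (x y : ℂ)
    (hx : ‖x‖ < 1) (hy : ‖y‖ < 1) (hx0 : x ≠ 0) (hy0 : y ≠ 0) :
    ∑ j ∈ Finset.Icc 1 (k - 1), (2 : ℂ) ^ (j - 1) *
        (Li₂ (k - j) j (x⁻¹ * y) x + Li₂ (k - j) j (x * y⁻¹) y) +
      Li₂ 1 (k - 1) x⁻¹ (x * y) + Li₂ 1 (k - 1) y⁻¹ (x * y) =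
    (Li 1 x + Li 1 y) * Li (k - 1) (x * y) + (k - 1 : ℂ) * Li k (x * y) := by
  have h₁ j := hasSum_doubleTerm_Li₂_inv_mul (k - j) j hx0 hx hy
  have h₂ j := (hasSum_doubleTerm_Li₂_inv_mul (k - j) j hy0 hy hx).doubleTerm_swap
  have h₃ := hasSum_doubleTerm_Li₂_inv 1 (k - 1) hx0 hx hy
  have h₄ := (hasSum_doubleTerm_Li₂_inv 1 (k - 1) hy0 hy hx).doubleTerm_swap
  have h₅ := hasSum_doubleTerm_Li_mul_Li 1 (k - 1) hx hy
  have h₆ := (hasSum_doubleTerm_Li_mul_Li 1 (k - 1) hy hx).doubleTerm_swap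
  have h₇ := hasSum_doubleTerm_Li k hx hy
  simp only [mul_comm y⁻¹ x, mul_comm y x] at h₂ h₄ h₆
  have hL := ((hasSum_sum (s := Icc 1 (k - 1))
    fun j _ => ((h₁ j).add (h₂ j)).mul_left ((2 : ℂ) ^ (j - 1))).add h₃).add h₄
  have hR := (h₅.add h₆).add (h₇.mul_left ((k : ℂ) - 1))
  rw [add_mul]
  refine hL.unique (hR.congr_fun fun ⟨i, l⟩ => ?_)
  have hcoeff := weighted_sum_formula_coeff (k := k) (m := i + 1) (n := l + 1) (by omega)
    i.succ_pos l.succ_pos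
  simp only [doubleTerm_apply, flip, pow_one]
  set X := x ^ (i + 1) * y ^ (l + 1)
  simp only [← add_mul, ← mul_assoc, ← sum_mul]
  rw [hcoeff]
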